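/- Let i, j ∈ {1,…,n} with |i − j| = 1. Then there is an isomorphism of (O(Z),O(Z))-bimodules O(V_j) ⊗_{O(V_j)^{s_j}} O(V_i ∩ V_j) ⊗_{O(V_i)^{s_i}} O(V_i ∩ V_j) ⊗_{O(V_j)^{s_j}} O(V_j) ≅ O(V_j) ⊗_{O(V_j)^{s_j}} O(V_j), where the left and right O(Z)-actions are through the restrictions O(Z) → O(V_j) on the outer factors. (This is the first Temperley–Lieb relation B_j ∗ B_i ∗ B_j ≅ B_j for the bimodules B_i := O(V_i) ⊗_{O(V_i)^{s_i}} O(V_i).) -/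

import Mathlib

/-! Basic setup: type A_n geometric representation, Weyl lines, combinatorics. -/

set_option linter.unusedSectionVars false
set_option synthInstance.maxHeartbeats 1000000
set_option maxHeartbeats 1000000

namespace TLpaper

/-- A permutation is a transposition. -/
def IsTransposition {α : Type} [DecidableEq α] (σ : Equiv.Perm α) : Prop :=
  ∃ a b, a ≠ b ∧ σ = Equiv.swap a b

variable (k : Type) [Field k] [CharZero k] (n : ℕ)

/-- The reflecting hyperplane of a permutation `t` inside `V = {x | ∑ x i = 0}`:
the set of points of `V` fixed by permuting the coordinates by `t`.  For a
transposition `t = (a b)` this is `{x ∈ V | x a = x b}`. -/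
def Hyp (t : Equiv.Perm (Fin (n + 1))) : Set (Fin (n + 1) → k) :=
  {x | (∑ i, x i) = 0 ∧ ∀ i, x (t i) = x i}

/-- A Weyl line: a one-dimensional linear subspace of `V` which is an
intersection of a (possibly empty) family of reflecting hyperplanes. -/
def IsWeylLine (L : Set (Fin (n + 1) → k)) : Prop :=
  (∃ v : Fin (n + 1) → k, v ≠ 0 ∧ L = Set.range fun c : k => c • v) ∧
  ∃ T : Set (Equiv.Perm (Fin (n + 1))),
    (∀ t ∈ T, IsTransposition t) ∧
    L = {x | (∑ i, x i) = 0} ∩ ⋂ t ∈ T, Hyp k n t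

/-- `Z`: the union of all Weyl lines. -/
def ZZ : Set (Fin (n + 1) → k) := ⋃ L ∈ {L | IsWeylLine k n L}, L

/-- `V_t`: the union of all Weyl lines transverse to `t` (i.e. not contained in `H_t`). -/
def Vt (t : Equiv.Perm (Fin (n + 1))) : Set (Fin (n + 1) → k) :=
  ⋃ L ∈ {L | IsWeylLine k n L ∧ ¬L ⊆ Hyp k n t}, L

open Fin.NatCast in
/-- The simple transposition `s_i = (i, i+1)` (0-indexed: it swaps coordinates
`i` and `i+1` of `Fin (n+1)`, for `i < n`). -/
def simple (i : ℕ) : Equiv.Perm (Fin (n + 1)) :=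
  Equiv.swap (i : Fin (n + 1)) ((i + 1 : ℕ) : Fin (n + 1))

/-- `V_i := V_{s_i}`. -/
def Vi (i : ℕ) : Set (Fin (n + 1) → k) := Vt k n (simple n i)

/-- The action of a permutation on a subset of `k^{n+1}` (permuting coordinates). -/
def permSet (σ : Equiv.Perm (Fin (n + 1))) (W : Set (Fin (n + 1) → k)) :
    Set (Fin (n + 1) → k) :=
  (fun x => x ∘ σ) '' W

/-- `i · W := V_i ∩ (W ∪ s_i (W))`. -/
def dotAct (i : ℕ) (W : Set (Fin (n + 1) → k)) : Set (Fin (n + 1) → k) :=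
  Vi k n i ∩ (W ∪ permSet k n (simple n i) W)

/-- The set `W_{i_1 ⋯ i_m}` associated with a sequence of indices. -/
def seqSet : List ℕ → Set (Fin (n + 1) → k)
  | [] => ZZ k n
  | [i] => Vi k n i
  | i :: j :: l => dotAct k n i (seqSet (j :: l))

/-- Membership in the family `𝒱_n`. -/
def memVn (W : Set (Fin (n + 1) → k)) : Prop :=
  ∃ l : List ℕ, l ≠ [] ∧ (∀ i ∈ l, i < n) ∧ W = seqSet k n l

/-- A set of pairwise commuting transpositions. -/
def CommTranspositions (Q : Set (Equiv.Perm (Fin (n + 1)))) : Prop :=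
  (∀ t ∈ Q, IsTransposition t) ∧ ∀ t ∈ Q, ∀ t' ∈ Q, t * t' = t' * t


/-! Coordinate rings of subvarieties of `k^{n+1}`. -/

noncomputable section

/-- The ring `O(X)` of regular functions on `X`: the quotient of the polynomial ring
`k[X_0, …, X_n]` by the vanishing ideal of `X`. -/
def O (X : Set (Fin (n + 1) → k)) : Type :=
  MvPolynomial (Fin (n + 1)) k ⧸ MvPolynomial.vanishingIdeal k X

instance (X : Set (Fin (n + 1) → k)) : CommRing (O k n X) :=
  inferInstanceAs (CommRing (MvPolynomial (Fin (n + 1)) k ⧸ MvPolynomial.vanishingIdeal k X))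

theorem vanishingIdeal_anti {X Y : Set (Fin (n + 1) → k)} (h : X ⊆ Y) :
    MvPolynomial.vanishingIdeal k Y ≤ MvPolynomial.vanishingIdeal k X := fun p hp => by
  rw [MvPolynomial.mem_vanishingIdeal_iff] at hp ⊢
  exact fun x hx => hp x (h hx)

/-- The (surjective) restriction homomorphism `O(Y) → O(X)` for `X ⊆ Y`. -/
def res {X Y : Set (Fin (n + 1) → k)} (h : X ⊆ Y) : O k n Y →+* O k n X :=
  Ideal.Quotient.factor (vanishingIdeal_anti k n h)

open Classical in
/-- The ring endomorphism of `O(X)` induced by a permutation `σ` of the coordinates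
(when `X` is `σ`-stable; the definition branches on this (true, in our uses)
stability condition to be total). -/
def permO (σ : Equiv.Perm (Fin (n + 1))) (X : Set (Fin (n + 1) → k)) :
    O k n X →+* O k n X :=
  if h : ∀ x ∈ X, x ∘ σ ∈ X then
    Ideal.Quotient.lift _
      ((Ideal.Quotient.mk _).comp (MvPolynomial.rename (R := k) ⇑σ).toRingHom)
      (fun p hp => by
        have hmem : (MvPolynomial.rename (R := k) ⇑σ) p ∈
            MvPolynomial.vanishingIdeal k X := by
          rw [MvPolynomial.mem_vanishingIdeal_iff]
          intro x hx
          rw [MvPolynomial.aeval_rename]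
          exact (MvPolynomial.mem_vanishingIdeal_iff.1 hp) _ (h x hx)
        exact Ideal.Quotient.eq_zero_iff_mem.2 hmem)
  else RingHom.id _

/-- The fixed subalgebra `O(V_i)^{s_i}` of `O(V_i)` under the automorphism induced
by the simple transposition `s_i`. -/
def fixedO (i : ℕ) : Subring (O k n (Vi k n i)) :=
  RingHom.eqLocus (permO k n (simple n i) (Vi k n i)) (RingHom.id _)

open Fin.NatCast in
/-- The image `f_i` of `X_i − X_{i+1}` in the coordinate ring `O(X)`. -/
def fbar (X : Set (Fin (n + 1) → k)) (i : ℕ) : O k n X :=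
  Ideal.Quotient.mk _
    (MvPolynomial.X (i : Fin (n + 1)) - MvPolynomial.X ((i + 1 : ℕ) : Fin (n + 1)))

theorem Vt_subset_ZZ (t : Equiv.Perm (Fin (n + 1))) : Vt k n t ⊆ ZZ k n := by
  refine Set.iUnion₂_subset fun L hL => ?_
  exact Set.subset_iUnion₂ (s := fun L _ => L) L hL.1

theorem Vi_subset_ZZ (i : ℕ) : Vi k n i ⊆ ZZ k n := Vt_subset_ZZ k n _

theorem seqSet_subset_ZZ : ∀ l : List ℕ, seqSet k n l ⊆ ZZ k n
  | [] => subset_rfl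
  | [_] => Vi_subset_ZZ k n _
  | _ :: _ :: _ => Set.inter_subset_left.trans (Vi_subset_ZZ k n _)

end

/-! Tensor products of commutative rings along ring homomorphisms. -/

noncomputable section RTensor

open scoped TensorProduct

variable (R A B : Type) [CommRing R] [CommRing A] [CommRing B]
variable (f : R →+* A) (g : R →+* B)

/-- The tensor product `A ⊗_R B` of two commutative rings along the ring
homomorphisms `f : R → A` and `g : R → B` (which define the `R`-module
structures); it is again a commutative ring. -/
def RTensor : Type :=
  letI := f.toAlgebra
  letI := g.toAlgebra
  A ⊗[R] B

instance : CommRing (RTensor R A B f g) :=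
  letI := f.toAlgebra
  letI := g.toAlgebra
  (inferInstance : CommRing (A ⊗[R] B))

/-- The inclusion `a ↦ a ⊗ 1` of the left factor. -/
def RTensor.inl : A →+* RTensor R A B f g :=
  letI := f.toAlgebra
  letI := g.toAlgebra
  Algebra.TensorProduct.includeLeftRingHom

/-- The inclusion `b ↦ 1 ⊗ b` of the right factor. -/
def RTensor.inr : B →+* RTensor R A B f g :=
  letI := f.toAlgebra
  letI := g.toAlgebra
  Algebra.TensorProduct.includeRight.toRingHom

end RTensor

end TLpaper

/-! A Weyl line is spanned by a vector taking at most two values (it is cut out by the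
equalities `x_a = x_b` that hold on it), so on `V_i ∩ V_j`, where `s_i`, `s_j` are
`(a b)`, `(b c)` up to order, a point satisfies `x_a = x_c`. Hence restriction maps
`O(V_i)^{s_i}` onto `O(V_i ∩ V_j)`, since `X_a` and `X_b` are restrictions of the invariants
`X_c` and `X_a + X_b - X_c`; it is injective because every point of `V_i` lies in
`V_i ∩ V_j` up to `s_i`. The same holds for `j`, so both middle tensor factors of
`B_j ∗ B_i ∗ B_j` collapse and leave `O(V_j) ⊗ O(V_j) = B_j`. -/

namespace TLpaper

open Equiv

section WeylLines

variable {k : Type} [Field k] {n : ℕ}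

theorem mem_Hyp_swap_iff {a b : Fin (n + 1)} {x : Fin (n + 1) → k} :
    x ∈ Hyp k n (swap a b) ↔ ∑ i, x i = 0 ∧ x a = x b := by
  refine and_congr_right fun _ => ⟨fun h => by simpa using (h a).symm, fun h i => ?_⟩
  rcases eq_or_ne i a with rfl | hia
  · simpa using h.symm
  rcases eq_or_ne i b with rfl | hib
  · simpa using h
  · rw [swap_apply_of_ne_of_ne hia hib]

theorem comp_symm_mem_Hyp_iff (σ t : Perm (Fin (n + 1))) (x : Fin (n + 1) → k) :
    x ∘ σ.symm ∈ Hyp k n t ↔ x ∈ Hyp k n (σ⁻¹ * t * σ) := by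
  refine and_congr (by simp [sum_comp]) ⟨fun h i => by simpa using h (σ i), fun h i => ?_⟩
  simpa using h (σ.symm i)

namespace IsWeylLine

variable {L : Set (Fin (n + 1) → k)}

theorem sum_eq_zero (hL : IsWeylLine k n L) {x : Fin (n + 1) → k} (hx : x ∈ L) :
    ∑ i, x i = 0 := by
  obtain ⟨-, T, -, rfl⟩ := hL
  exact hx.1

theorem zero_mem (hL : IsWeylLine k n L) : 0 ∈ L := by
  obtain ⟨⟨v, -, rfl⟩, -⟩ := hL
  exact ⟨0, zero_smul k v⟩

theorem exists_eq_smul (hL : IsWeylLine k n L) {x z : Fin (n + 1) → k} (hx : x ∈ L)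
    (hx0 : x ≠ 0) (hz : z ∈ L) : ∃ d : k, z = d • x := by
  obtain ⟨⟨v, -, rfl⟩, -⟩ := hL
  obtain ⟨c, rfl⟩ := hx
  obtain ⟨d, rfl⟩ := hz
  have hc : c ≠ 0 := by rintro rfl; simp at hx0
  exact ⟨d / c, by simp only [smul_smul, div_mul_cancel₀ d hc]⟩

theorem mem_of_sum_eq_zero (hL : IsWeylLine k n L) {y : Fin (n + 1) → k}
    (hy : ∑ i, y i = 0) (hyL : ∀ a b, (∀ z ∈ L, z a = z b) → y a = y b) : y ∈ L := by
  obtain ⟨-, T, hT, hTL⟩ := hL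
  rw [hTL]
  refine ⟨hy, Set.mem_iInter₂.2 fun t ht => ?_⟩
  obtain ⟨a, b, -, rfl⟩ := hT t ht
  refine mem_Hyp_swap_iff.2 ⟨hy, hyL a b fun z hz => ?_⟩
  rw [hTL] at hz
  exact (mem_Hyp_swap_iff.1 (Set.mem_iInter₂.1 hz.2 _ ht)).2

open Classical Finset in
theorem eq_zero_of_ne [CharZero k] (hL : IsWeylLine k n L) {x : Fin (n + 1) → k} (hx : x ∈ L)
    {a b c : Fin (n + 1)} (hab : x a ≠ x b) (hca : x c ≠ x a) (hcb : x c ≠ x b) : x c = 0 := by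
  have hx0 : x ≠ 0 := fun h => hab (by simp [h])
  set N : Fin (n + 1) → k := fun m => (#{i | x i = x m} : ℕ)
  have hN0 : ∀ m, N m ≠ 0 := fun m => Nat.cast_ne_zero.2 (card_ne_zero.2 ⟨m, by simp⟩)
  have hsum : ∀ (m : Fin (n + 1)) (r : k), ∑ i, (if x i = x m then r else 0) = N m * r := by
    intro m r
    rw [← sum_filter, sum_const, nsmul_eq_mul]
  -- `y` sums to zero and is constant on the level sets of `x`, so it lies on `L`; being
  -- nonzero at `a` and zero at `c`, it is a nonzero multiple of `x` forcing `x c = 0`.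
  set y : Fin (n + 1) → k := fun i =>
    (if x i = x a then N b else 0) - (if x i = x b then N a else 0)
  have hyL : y ∈ L := by
    refine hL.mem_of_sum_eq_zero ?_ fun i j hij => ?_
    · simp only [y, sum_sub_distrib, hsum, mul_comm, sub_self]
    · simp only [y, hij x hx]
  obtain ⟨d, hd⟩ := hL.exists_eq_smul hx hx0 hyL
  have hya := congrFun hd a
  have hyc := congrFun hd c
  simp only [y, if_neg hab, if_neg hca, if_neg hcb, Pi.smul_apply, smul_eq_mul] at hya hyc
  have hd0 : d ≠ 0 := by rintro rfl; exact hN0 b (by simpa using hya)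
  exact (mul_eq_zero.1 (by simpa using hyc.symm)).resolve_left hd0

theorem eq_of_ne_of_ne [CharZero k] (hL : IsWeylLine k n L) {x : Fin (n + 1) → k} (hx : x ∈ L)
    {a b c : Fin (n + 1)} (hab : x a ≠ x b) (hbc : x b ≠ x c) : x a = x c := by
  by_contra hac
  exact hac ((hL.eq_zero_of_ne hx hbc hab hac).trans
    (hL.eq_zero_of_ne hx hab (Ne.symm hac) hbc.symm).symm)

theorem image_comp (hL : IsWeylLine k n L) (σ : Perm (Fin (n + 1))) :
    IsWeylLine k n ((fun x => x ∘ σ) '' L) := by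
  obtain ⟨⟨v, hv0, hvL⟩, T, hT, hTL⟩ := hL
  refine ⟨⟨v ∘ σ, fun h => hv0 ?_, ?_⟩, (fun t => σ⁻¹ * t * σ) '' T, ?_, ?_⟩
  · funext i
    simpa using congrFun h (σ.symm i)
  · rw [hvL, ← Set.range_comp]
    rfl
  · rintro _ ⟨t, ht, rfl⟩
    obtain ⟨a, b, hab, rfl⟩ := hT t ht
    exact ⟨σ⁻¹ a, σ⁻¹ b, by simpa using hab, by rw [swap_apply_apply, inv_inv]⟩
  · rw [Set.image_eq_preimage_of_inverse (f := fun x => x ∘ σ) (g := fun x => x ∘ σ.symm)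
      (fun x => by ext; simp) (fun x => by ext; simp), hTL]
    ext x
    simp [comp_symm_mem_Hyp_iff, sum_comp]

end IsWeylLine

theorem isWeylLine_range_smul_sub_one {a b : Fin (n + 1)} (hab : a ≠ b) :
    IsWeylLine k n (Set.range fun c : k => c • ((n + 1 : k) • Pi.single a 1 - 1)) := by
  set v : Fin (n + 1) → k := (n + 1 : k) • Pi.single a 1 - 1
  have hva : v a = n := by simp [v]
  have hv : ∀ i ≠ a, v i = -1 := fun i hi => by simp [v, hi]
  refine ⟨⟨v, fun h => by simpa [hv b hab.symm] using congrFun h b, rfl⟩,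
    {t | ∃ c, c ≠ a ∧ c ≠ b ∧ t = swap c b}, ?_, ?_⟩
  · rintro _ ⟨c, -, hcb, rfl⟩
    exact ⟨c, b, hcb, rfl⟩
  have hvsum : ∑ i, v i = 0 := by simp [v, Finset.sum_sub_distrib, ← Finset.mul_sum]
  ext x
  simp only [Set.mem_range, Set.mem_inter_iff, Set.mem_ofPred_eq, Set.mem_iInter₂]
  constructor
  · rintro ⟨c, rfl⟩
    have hsum : ∑ i, (c • v) i = 0 := by simp [← Finset.mul_sum, hvsum]
    refine ⟨hsum, ?_⟩
    rintro _ ⟨i, hia, -, rfl⟩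
    exact mem_Hyp_swap_iff.2 ⟨hsum, by simp [hv i hia, hv b hab.symm]⟩
  · rintro ⟨hsum, hT⟩
    have hxb : ∀ i ≠ a, x i = x b := fun i hia => by
      rcases eq_or_ne i b with rfl | hib
      · rfl
      · exact (mem_Hyp_swap_iff.1 (hT _ ⟨i, hia, hib, rfl⟩)).2
    have hxa : x a = -(n * x b) := by
      rw [Fintype.sum_eq_add_sum_compl a,
        Finset.sum_congr rfl fun i hi => hxb i (by simpa using hi), Finset.sum_const,
        Finset.card_compl, Finset.card_singleton, Fintype.card_fin, nsmul_eq_mul] at hsum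
      simpa [eq_neg_iff_add_eq_zero] using hsum
    refine ⟨-x b, funext fun i => ?_⟩
    rcases eq_or_ne i a with rfl | hia
    · simp [hva, hxa, mul_comm]
    · simp [hv i hia, hxb i hia]

variable {a b c : Fin (n + 1)} {x : Fin (n + 1) → k}

theorem mem_Vt_swap {L : Set (Fin (n + 1) → k)} (hL : IsWeylLine k n L) (hxL : x ∈ L)
    (hab : x a ≠ x b) : x ∈ Vt k n (swap a b) :=
  Set.mem_iUnion₂.2 ⟨L, ⟨hL, fun h => hab (mem_Hyp_swap_iff.1 (h hxL)).2⟩, hxL⟩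

theorem apply_ne_of_mem_Vt_swap (hx : x ∈ Vt k n (swap a b)) (hx0 : x ≠ 0) : x a ≠ x b := by
  obtain ⟨L, ⟨hL, hLH⟩, hxL⟩ := Set.mem_iUnion₂.1 hx
  refine fun hab => hLH fun z hz => mem_Hyp_swap_iff.2 ⟨hL.sum_eq_zero hz, ?_⟩
  obtain ⟨d, rfl⟩ := hL.exists_eq_smul hxL hx0 hz
  simp [hab]

theorem zero_mem_Vt_swap [CharZero k] (hab : a ≠ b) :
    (0 : Fin (n + 1) → k) ∈ Vt k n (swap a b) := by
  have hv : ((n + 1 : k) • Pi.single a 1 - 1 : Fin (n + 1) → k) ∈ Vt k n (swap a b) := by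
    refine mem_Vt_swap (isWeylLine_range_smul_sub_one hab) ⟨1, one_smul k _⟩ ?_
    simpa [hab.symm] using fun h => Nat.cast_add_one_ne_zero (R := k) n (by simp [h])
  obtain ⟨L, hL, -⟩ := Set.mem_iUnion₂.1 hv
  exact Set.mem_iUnion₂.2 ⟨L, hL, hL.1.zero_mem⟩

theorem comp_swap_mem_Vt_swap (hx : x ∈ Vt k n (swap a b)) :
    x ∘ swap a b ∈ Vt k n (swap a b) := by
  rcases eq_or_ne x 0 with rfl | hx0
  · exact hx
  obtain ⟨L, ⟨hL, -⟩, hxL⟩ := Set.mem_iUnion₂.1 hx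
  refine mem_Vt_swap (hL.image_comp _) ⟨x, hxL, rfl⟩ ?_
  simpa using (apply_ne_of_mem_Vt_swap hx hx0).symm

theorem mem_Vt_swap_or_comp_swap_mem [CharZero k] (hx : x ∈ Vt k n (swap a b)) (hca : c ≠ a)
    (hcb : c ≠ b) : x ∈ Vt k n (swap b c) ∨ x ∘ swap a b ∈ Vt k n (swap b c) := by
  rcases eq_or_ne x 0 with rfl | hx0
  · exact Or.inl (zero_mem_Vt_swap hcb.symm)
  obtain ⟨L, ⟨hL, -⟩, hxL⟩ := Set.mem_iUnion₂.1 hx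
  by_cases hbc : x b = x c
  · refine Or.inr (mem_Vt_swap (hL.image_comp _) ⟨x, hxL, rfl⟩ ?_)
    simpa [swap_apply_of_ne_of_ne hca hcb, ← hbc] using apply_ne_of_mem_Vt_swap hx hx0
  · exact Or.inl (mem_Vt_swap hL hxL hbc)

theorem apply_eq_of_mem_Vt_swap_of_mem_Vt_swap [CharZero k] (hab : x ∈ Vt k n (swap a b))
    (hbc : x ∈ Vt k n (swap b c)) : x a = x c := by
  rcases eq_or_ne x 0 with rfl | hx0
  · rfl
  obtain ⟨L, ⟨hL, -⟩, hxL⟩ := Set.mem_iUnion₂.1 hab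
  exact hL.eq_of_ne_of_ne hxL (apply_ne_of_mem_Vt_swap hab hx0) (apply_ne_of_mem_Vt_swap hbc hx0)

end WeylLines

noncomputable section CoordinateRings

open MvPolynomial

variable {k : Type} [Field k] {n : ℕ}

def mkO (Y : Set (Fin (n + 1) → k)) : MvPolynomial (Fin (n + 1)) k →+* O k n Y :=
  Ideal.Quotient.mk (vanishingIdeal k Y)

variable {Y W : Set (Fin (n + 1) → k)}

theorem mkO_surjective (Y : Set (Fin (n + 1) → k)) : Function.Surjective (mkO Y) :=
  Ideal.Quotient.mk_surjective

theorem mkO_eq_zero_iff {p : MvPolynomial (Fin (n + 1)) k} :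
    mkO Y p = 0 ↔ ∀ x ∈ Y, eval x p = 0 :=
  Ideal.Quotient.eq_zero_iff_mem.trans mem_vanishingIdeal_iff

theorem mkO_eq_mkO_iff {p q : MvPolynomial (Fin (n + 1)) k} :
    mkO Y p = mkO Y q ↔ ∀ x ∈ Y, eval x p = eval x q := by
  rw [← sub_eq_zero, ← map_sub, mkO_eq_zero_iff]
  simp only [map_sub, sub_eq_zero]

theorem res_mkO [CharZero k] (h : W ⊆ Y) (p : MvPolynomial (Fin (n + 1)) k) :
    res k n h (mkO Y p) = mkO W p :=
  Ideal.Quotient.factor_mk _ _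

theorem permO_mkO {σ : Perm (Fin (n + 1))} (hY : ∀ x ∈ Y, x ∘ σ ∈ Y)
    (p : MvPolynomial (Fin (n + 1)) k) : permO k n σ Y (mkO Y p) = mkO Y (rename σ p) := by
  rw [permO]
  erw [dif_pos hY]
  rfl

theorem mkO_mem_eqLocus_permO {σ : Perm (Fin (n + 1))} (hY : ∀ x ∈ Y, x ∘ σ ∈ Y)
    {p : MvPolynomial (Fin (n + 1)) k} (hp : rename σ p = p) :
    mkO Y p ∈ RingHom.eqLocus (permO k n σ Y) (RingHom.id _) := by
  simp [permO_mkO hY, hp]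

variable [CharZero k] (hWY : W ⊆ Y)

theorem injective_res_comp_eqLocus_permO {σ : Perm (Fin (n + 1))}
    (hY : ∀ x ∈ Y, x ∘ σ ∈ Y) (hcover : ∀ x ∈ Y, x ∈ W ∨ x ∘ σ ∈ W) :
    Function.Injective
      ((res k n hWY).comp (RingHom.eqLocus (permO k n σ Y) (RingHom.id _)).subtype) := by
  rw [injective_iff_map_eq_zero]
  rintro ⟨r, hr⟩ hr0
  obtain ⟨q, rfl⟩ := mkO_surjective Y r
  have hinv : ∀ x ∈ Y, eval (x ∘ σ) q = eval x q := by
    simpa [permO_mkO hY, mkO_eq_mkO_iff, eval_rename] using hr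
  have hW : ∀ x ∈ W, eval x q = 0 := by
    simpa [res_mkO, mkO_eq_zero_iff] using hr0
  refine Subtype.ext (mkO_eq_zero_iff.2 fun x hx => ?_)
  rcases hcover x hx with h | h
  · exact hW x h
  · rw [← hinv x hx]
    exact hW _ h

theorem surjective_res_comp_eqLocus_permO_swap {a b c : Fin (n + 1)} (hca : c ≠ a) (hcb : c ≠ b)
    (hY : ∀ x ∈ Y, x ∘ swap a b ∈ Y) (hWac : ∀ x ∈ W, x a = x c) :
    Function.Surjective ((res k n hWY).comp
      (RingHom.eqLocus (permO k n (swap a b) Y) (RingHom.id _)).subtype) := by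
  set φ := (res k n hWY).comp (RingHom.eqLocus (permO k n (swap a b) Y) (RingHom.id _)).subtype
  have hinv : ∀ p, rename (swap a b) p = p → mkO W p ∈ φ.range := fun p hp =>
    ⟨⟨mkO Y p, mkO_mem_eqLocus_permO hY hp⟩, res_mkO hWY p⟩
  have hXa : mkO W (X a) = mkO W (X c) := mkO_eq_mkO_iff.2 fun x hx => by simp [hWac x hx]
  have hXc : mkO W (X c) ∈ φ.range := hinv _ (by simp [swap_apply_of_ne_of_ne hca hcb])
  have hXab : mkO W (X a + X b) ∈ φ.range := hinv _ (by simp [add_comm])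
  have hX_mem : ∀ m, mkO W (X m) ∈ φ.range := by
    intro m
    by_cases hma : m = a
    · rwa [hma, hXa]
    by_cases hmb : m = b
    · rw [hmb, ← add_sub_cancel_left (X a) (X b), map_sub, hXa]
      exact sub_mem hXab hXc
    · exact hinv _ (by simp [swap_apply_of_ne_of_ne hma hmb])
  suffices h : ∀ q, mkO W q ∈ φ.range from
    fun z => (mkO_surjective W z).elim fun q hq => hq ▸ h q
  intro q
  induction q using MvPolynomial.induction_on with
  | C r => exact hinv _ (rename_C _ r)
  | add p q hp hq => rw [map_add]; exact add_mem hp hq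
  | mul_X p m hp => rw [map_mul]; exact mul_mem hp (hX_mem m)

end CoordinateRings

section FixedRings

open Fin.NatCast

variable {k : Type} [Field k] [CharZero k] {n : ℕ}

theorem bijective_res_fixed_Vt_inter {σ : Perm (Fin (n + 1))} {a b c : Fin (n + 1)}
    (hσ : σ = swap a b) (hca : c ≠ a) (hcb : c ≠ b) {W : Set (Fin (n + 1) → k)}
    (hW : W = Vt k n σ ∩ Vt k n (swap b c)) (hWY : W ⊆ Vt k n σ) :
    Function.Bijective ((res k n hWY).comp
      (RingHom.eqLocus (permO k n σ (Vt k n σ)) (RingHom.id _)).subtype) := by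
  subst hσ hW
  have hY : ∀ x ∈ Vt k n (swap a b), x ∘ swap a b ∈ Vt k n (swap a b) :=
    fun x hx => comp_swap_mem_Vt_swap hx
  refine ⟨injective_res_comp_eqLocus_permO hWY hY fun x hx => ?_,
    surjective_res_comp_eqLocus_permO_swap hWY hca hcb hY fun x hx =>
      apply_eq_of_mem_Vt_swap_of_mem_Vt_swap hx.1 hx.2⟩
  exact (mem_Vt_swap_or_comp_swap_mem hx hca hcb).imp (⟨hx, ·⟩) (⟨hY x hx, ·⟩)

theorem bijective_res_fixedO_inter_succ {p : ℕ} (hp : p + 1 < n)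
    {W : Set (Fin (n + 1) → k)} (hW : W = Vi k n p ∩ Vi k n (p + 1)) (hWp : W ⊆ Vi k n p)
    (hWp' : W ⊆ Vi k n (p + 1)) :
    Function.Bijective ((res k n hWp).comp (fixedO k n p).subtype) ∧
      Function.Bijective ((res k n hWp').comp (fixedO k n (p + 1)).subtype) := by
  have hne : ∀ m m', m ≤ n → m' ≤ n → m ≠ m' → (m : Fin (n + 1)) ≠ m' := fun m m' hm hm' h e =>
    h (by rw [← Fin.val_cast_of_lt (Nat.lt_succ_of_le hm), e,
      Fin.val_cast_of_lt (Nat.lt_succ_of_le hm')])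
  -- `s_p = (p, p+1)` and `s_{p+1} = (p+2, p+1)`, the shared point `p+1` playing the role of `b`
  refine ⟨bijective_res_fixed_Vt_inter rfl (hne (p + 1 + 1) p (by omega) (by omega) (by omega))
    (hne (p + 1 + 1) (p + 1) (by omega) (by omega) (by omega)) hW hWp,
    bijective_res_fixed_Vt_inter (σ := simple n (p + 1)) (swap_comm _ _)
      (hne p (p + 1 + 1) (by omega) (by omega) (by omega))
      (hne p (p + 1) (by omega) (by omega) (by omega)) ?_ hWp'⟩
  rw [hW, Set.inter_comm, swap_comm]
  rfl

theorem bijective_res_fixedO_of_adjacent {i j : ℕ} (hi : i < n) (hj : j < n)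
    (hadj : i = j + 1 ∨ j = i + 1) :
    Function.Bijective
        ((res k n (Set.inter_subset_right : Vi k n i ∩ Vi k n j ⊆ Vi k n j)).comp
          (fixedO k n j).subtype) ∧
      Function.Bijective
        ((res k n (Set.inter_subset_left : Vi k n i ∩ Vi k n j ⊆ Vi k n i)).comp
          (fixedO k n i).subtype) := by
  rcases hadj with rfl | rfl
  · exact bijective_res_fixedO_inter_succ hi (Set.inter_comm _ _) _ _
  · exact (bijective_res_fixedO_inter_succ hj rfl _ _).symm

end FixedRings

noncomputable section RTensorLemmas

namespace RTensor

open scoped TensorProduct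

variable {R A A' B : Type} [CommRing R] [CommRing A] [CommRing A'] [CommRing B]
  {f : R →+* A} {g : R →+* B}

def collapse (hg : Function.Bijective g) : RTensor R A B f g ≃+* A :=
  letI := f.toAlgebra
  letI := g.toAlgebra
  ((Algebra.TensorProduct.congr AlgEquiv.refl
    (AlgEquiv.ofRingEquiv (f := RingEquiv.ofBijective g hg) fun _ => rfl).symm).trans
      (Algebra.TensorProduct.rid R R A)).toRingEquiv

theorem collapse_inl (hg : Function.Bijective g) (a : A) :
    collapse hg (inl R A B f g a) = a := by
  let := f.toAlgebra
  let := g.toAlgebra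
  show Algebra.TensorProduct.rid R R A (a ⊗ₜ _) = a
  simp

theorem collapse_inr (hg : Function.Bijective g) (r : R) :
    collapse hg (inr R A B f g (g r)) = f r := by
  let := f.toAlgebra
  let := g.toAlgebra
  have hr : (RingEquiv.ofBijective g hg).symm (g r) = r :=
    (RingEquiv.ofBijective g hg).symm_apply_apply r
  show Algebra.TensorProduct.rid R R A ((1 : A) ⊗ₜ (RingEquiv.ofBijective g hg).symm (g r)) = f r
  rw [hr, Algebra.TensorProduct.rid_tmul, Algebra.smul_def, mul_one]
  rfl

def congrLeft {f' : R →+* A'} (e : A ≃+* A') (he : ∀ r, e (f r) = f' r) :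
    RTensor R A B f g ≃+* RTensor R A' B f' g :=
  letI := f.toAlgebra
  letI := g.toAlgebra
  letI := f'.toAlgebra
  (Algebra.TensorProduct.congr (AlgEquiv.ofRingEquiv (f := e) he) AlgEquiv.refl).toRingEquiv

theorem congrLeft_inl {f' : R →+* A'} (e : A ≃+* A') (he : ∀ r, e (f r) = f' r) (a : A) :
    congrLeft e he (inl R A B f g a) = inl R A' B f' g (e a) := by
  let := f.toAlgebra
  let := g.toAlgebra
  let := f'.toAlgebra
  show Algebra.TensorProduct.map _ _ (a ⊗ₜ[R] (1 : B)) = e a ⊗ₜ[R] (1 : B)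
  simp

theorem congrLeft_inr {f' : R →+* A'} (e : A ≃+* A') (he : ∀ r, e (f r) = f' r) (b : B) :
    congrLeft e he (inr R A B f g b) = inr R A' B f' g b := by
  let := f.toAlgebra
  let := g.toAlgebra
  let := f'.toAlgebra
  show Algebra.TensorProduct.map _ _ ((1 : A) ⊗ₜ[R] b) = (1 : A') ⊗ₜ[R] b
  simp

/-- The source is `A ⊗_R M ⊗_S M ⊗_R A`, bracketed from the left. -/
theorem exists_ringEquiv_collapse_middle {S M : Type} [CommRing S] [CommRing M] (ι : R →+* A)
    {φ : R →+* M} {ψ : S →+* M} (hφ : Function.Bijective φ) (hψ : Function.Bijective ψ) :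
    ∃ e : RTensor R (RTensor S (RTensor R A M ι φ) M ((inr R A M ι φ).comp ψ) ψ) A
        ((inr S (RTensor R A M ι φ) M ((inr R A M ι φ).comp ψ) ψ).comp φ) ι ≃+*
        RTensor R A A ι ι,
      (∀ a, e (inl _ _ _ _ _ (inl _ _ _ _ _ (inl R A M ι φ a))) = inl R A A ι ι a) ∧
        ∀ a, e (inr _ _ _ _ _ a) = inr R A A ι ι a := by
  let c : RTensor S (RTensor R A M ι φ) M ((inr R A M ι φ).comp ψ) ψ ≃+* A :=
    (collapse hψ).trans (collapse hφ)
  have hc : ∀ r, c ((inr S (RTensor R A M ι φ) M ((inr R A M ι φ).comp ψ) ψ).comp φ r) = ι r := by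
    intro r
    obtain ⟨s, hs⟩ := hψ.2 (φ r)
    show collapse hφ (collapse hψ (inr _ _ _ _ _ (φ r))) = ι r
    rw [← hs, collapse_inr, RingHom.comp_apply, hs, collapse_inr]
  refine ⟨congrLeft c hc, fun a => ?_, congrLeft_inr c hc⟩
  rw [congrLeft_inl]
  show inl R A A ι ι (collapse hφ (collapse hψ (inl _ _ _ _ _ (inl R A M ι φ a)))) = _
  rw [collapse_inl, collapse_inl]

end RTensor

end RTensorLemmas

variable (k : Type) [Field k] [CharZero k] (n : ℕ)

/-- (0-indexed.)  For `|i − j| = 1` there is an isomorphism of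
`(O(Z), O(Z))`-bimodules
`O(V_j) ⊗_{R_j} O(V_i ∩ V_j) ⊗_{R_i} O(V_i ∩ V_j) ⊗_{R_j} O(V_j) ≅ O(V_j) ⊗_{R_j} O(V_j)`
(`R_m := O(V_m)^{s_m}`), the `O(Z)`-actions being through the restrictions
`O(Z) → O(V_j)` on the outer factors.  This is the first Temperley–Lieb relation
`B_j ∗ B_i ∗ B_j ≅ B_j` for `B_m := O(V_m) ⊗_{R_m} O(V_m)`. -/
theorem first_temperley_lieb_relation (i j : ℕ) (hi : i < n) (hj : j < n)
    (hadj : i = j + 1 ∨ j = i + 1) :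
    letI M := O k n (Vi k n i ∩ Vi k n j)
    letI fjM : fixedO k n j →+* M :=
      (res k n (Set.inter_subset_right : Vi k n i ∩ Vi k n j ⊆ Vi k n j)).comp
        (fixedO k n j).subtype
    letI fiM : fixedO k n i →+* M :=
      (res k n (Set.inter_subset_left : Vi k n i ∩ Vi k n j ⊆ Vi k n i)).comp
        (fixedO k n i).subtype
    letI subj : fixedO k n j →+* O k n (Vi k n j) := (fixedO k n j).subtype
    -- T1 = O(V_j) ⊗_{R_j} O(V_i ∩ V_j)
    letI T1 := RTensor (fixedO k n j) (O k n (Vi k n j)) M subj fjM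
    letI fiT1 : fixedO k n i →+* T1 :=
      (RTensor.inr (fixedO k n j) (O k n (Vi k n j)) M subj fjM).comp fiM
    -- T2 = T1 ⊗_{R_i} O(V_i ∩ V_j)
    letI T2 := RTensor (fixedO k n i) T1 M fiT1 fiM
    letI fjT2 : fixedO k n j →+* T2 :=
      (RTensor.inr (fixedO k n i) T1 M fiT1 fiM).comp fjM
    -- T3 = T2 ⊗_{R_j} O(V_j)
    letI T3 := RTensor (fixedO k n j) T2 (O k n (Vi k n j)) fjT2 subj
    -- RHS = O(V_j) ⊗_{R_j} O(V_j)
    letI RHS := RTensor (fixedO k n j) (O k n (Vi k n j)) (O k n (Vi k n j)) subj subj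
    letI resj : O k n (ZZ k n) →+* O k n (Vi k n j) := res k n (Vi_subset_ZZ k n j)
    letI l3 : O k n (ZZ k n) →+* T3 :=
      ((RTensor.inl (fixedO k n j) T2 (O k n (Vi k n j)) fjT2 subj).comp
        ((RTensor.inl (fixedO k n i) T1 M fiT1 fiM).comp
          (RTensor.inl (fixedO k n j) (O k n (Vi k n j)) M subj fjM))).comp resj
    letI r3 : O k n (ZZ k n) →+* T3 :=
      (RTensor.inr (fixedO k n j) T2 (O k n (Vi k n j)) fjT2 subj).comp resj
    letI lR : O k n (ZZ k n) →+* RHS :=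
      (RTensor.inl (fixedO k n j) (O k n (Vi k n j)) (O k n (Vi k n j)) subj subj).comp resj
    letI rR : O k n (ZZ k n) →+* RHS :=
      (RTensor.inr (fixedO k n j) (O k n (Vi k n j)) (O k n (Vi k n j)) subj subj).comp resj
    ∃ e : T3 ≃+ RHS,
      (∀ (a : O k n (ZZ k n)) (x : T3), e (l3 a * x) = lR a * e x) ∧
      (∀ (a : O k n (ZZ k n)) (x : T3), e (x * r3 a) = e x * rR a) := by
  obtain ⟨hfjM, hfiM⟩ := bijective_res_fixedO_of_adjacent (k := k) hi hj hadj
  obtain ⟨e, hl, hr⟩ := RTensor.exists_ringEquiv_collapse_middle (fixedO k n j).subtype hfjM hfiM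
  exact ⟨e.toAddEquiv, fun a x => (map_mul e _ x).trans (congrArg (· * e x) (hl _)),
    fun a x => (map_mul e x _).trans (congrArg (e x * ·) (hr _))⟩

end TLpaper
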